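/- Let (a_n), (b_n), (c_n) be sequences of complex numbers whose exponential generating functions satisfy c̃(t) = ã(t) + b̃(t) + (e^t − 1)·ã(t)·b̃(t) in ℂ[[t]]. If the ordinary generating functions a(t) = Σ a_n tⁿ and b(t) = Σ b_n tⁿ are both rational, then the ordinary generating function c(t) = Σ c_n tⁿ is also rational. -/

import Mathlib

/-- A power series is rational if `q * a = p` for polynomials `p q` with `q 0 ≠ 0`. -/
def IsRationalPS (a : PowerSeries ℂ) : Prop :=
  ∃ p q : Polynomial ℂ, q.coeff 0 ≠ 0 ∧
    (q : PowerSeries ℂ) * a = (p : PowerSeries ℂ)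

/-- A power series is algebraic over ℂ(t) if it is annihilated by a nonzero
polynomial `F(t,y) ∈ ℂ[t][y]`. -/
def IsAlgebraicPS (b : PowerSeries ℂ) : Prop :=
  ∃ F : Polynomial (Polynomial ℂ), F ≠ 0 ∧
    Polynomial.eval₂ Polynomial.coeToPowerSeries.ringHom b F = 0

/-- The exponential generating function of a sequence:  `∑ aₙ tⁿ/n!`. -/
noncomputable def egf (a : ℕ → ℂ) : PowerSeries ℂ :=
  PowerSeries.mk fun n => a n / n.factorial

/-- The formal exponential series `e^t = ∑ tⁿ/n!`. -/
noncomputable def expPS : PowerSeries ℂ :=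
  PowerSeries.mk fun n => 1 / n.factorial

/-!
A sequence has a rational ordinary generating function iff it is linearly representable,
`aₙ = φ (Tⁿ v)` for an endomorphism `T` of a finite-dimensional space: given `q · a = p`, the
shift acts on the finite-dimensional space of sequences whose series times `q` is a polynomial
of bounded degree; conversely, by Cayley–Hamilton the reversed characteristic polynomial of `T`
is a denominator. Products of exponential generating functions are binomial convolutions, and
the binomial theorem for the commuting operators `T ⊗ 1` and `1 ⊗ S` shows that binomial
convolution preserves linear representability. As `eᵗ - 1` is the exponential generating
function of `0, 1, 1, …`, whose ordinary generating function `t / (1 - t)` is rational, `c` is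
a sum of sequences with rational ordinary generating functions.
-/

open PowerSeries Polynomial
open Finset hiding mk

universe u

section LinearRepresentable

variable {K : Type u} [Field K]

def IsLinearRepresentable (a : ℕ → K) : Prop :=
  ∃ (V : Type u) (_ : AddCommGroup V) (_ : Module K V) (_ : FiniteDimensional K V)
    (T : Module.End K V) (φ : Module.Dual K V) (v : V), ∀ n, a n = φ ((T ^ n) v)

theorem PowerSeries.coeff_add_coe_reflect_mul {χ : K[X]} {D : ℕ} (hχ : χ.natDegree ≤ D)
    (f : K⟦X⟧) (m : ℕ) :
    coeff (m + D) ((reflect D χ : K⟦X⟧) * f) =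
      ∑ k ∈ range (D + 1), χ.coeff k * coeff (m + k) f := by
  rw [coeff_mul, Nat.sum_antidiagonal_eq_sum_range_succ
    (fun i j => (reflect D χ : K⟦X⟧).coeff i * coeff j f)]
  have hvanish : ∀ i ∈ range (m + D + 1), i ∉ range (D + 1) →
      coeff i (reflect D χ : K⟦X⟧) * coeff (m + D - i) f = 0 := by
    intro i _ hi
    rw [mem_range, not_lt] at hi
    rw [Polynomial.coeff_coe, coeff_reflect, revAt_eq_self_of_lt (by omega),
      coeff_eq_zero_of_natDegree_lt (by omega), zero_mul]
  rw [← sum_subset (range_subset_range.2 (by omega)) hvanish, ← sum_range_reflect]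
  refine sum_congr rfl fun k hk => ?_
  rw [mem_range] at hk
  rw [Polynomial.coeff_coe, coeff_reflect, revAt_le (by omega)]
  congr 3 <;> omega

theorem IsLinearRepresentable.exists_mul_eq_coe {a : ℕ → K} (ha : IsLinearRepresentable a) :
    ∃ p q : K[X], q.coeff 0 ≠ 0 ∧ (q : K⟦X⟧) * mk a = p := by
  obtain ⟨V, _, _, _, T, φ, v, hav⟩ := ha
  set χ := T.charpoly
  set D := χ.natDegree
  set f := (reflect D χ : K⟦X⟧) * mk a
  have hrec : ∀ m, coeff (m + D) f = 0 := by
    intro m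
    calc coeff (m + D) f = φ ((T ^ m) (aeval T χ v)) := by
          rw [coeff_add_coe_reflect_mul le_rfl, aeval_eq_sum_range' (Nat.lt_succ_self D)]
          simp [hav, map_sum, pow_add, D]
      _ = 0 := by rw [T.aeval_self_charpoly]; simp
  refine ⟨trunc D f, reflect D χ, ?_, ?_⟩
  · rw [coeff_reflect, revAt_le (Nat.zero_le _), Nat.sub_zero, T.charpoly_monic.coeff_natDegree]
    exact one_ne_zero
  · have hshift : (mk fun i => coeff (i + D) f) = 0 := by ext; simp [hrec]
    simpa only [hshift, mul_zero, zero_add] using eq_X_pow_mul_shift_add_trunc D f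

def seqShift : Module.End K (ℕ → K) := LinearMap.funLeft K K Nat.succ

theorem seqShift_pow_apply (n : ℕ) (s : ℕ → K) (m : ℕ) : (seqShift ^ n) s m = s (m + n) := by
  induction n generalizing m with
  | zero => rfl
  | succ n ih =>
    rw [pow_succ', Module.End.mul_apply]
    exact (ih (m + 1)).trans (congrArg s (by omega))

theorem IsLinearRepresentable.of_mem_of_shift_mem {W : Submodule K (ℕ → K)}
    [FiniteDimensional K W] (hW : ∀ s ∈ W, seqShift s ∈ W) {a : ℕ → K} (ha : a ∈ W) :
    IsLinearRepresentable a :=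
  ⟨W, _, _, inferInstance, seqShift.restrict hW, LinearMap.proj 0 ∘ₗ W.subtype, ⟨a, ha⟩,
    fun n => by rw [Module.End.pow_restrict]; simp [seqShift_pow_apply]⟩

def denomSubmodule (q : K[X]) (d : ℕ) : Submodule K (ℕ → K) where
  carrier := {s | ∀ m, coeff (m + d) ((q : K⟦X⟧) * mk s) = 0}
  add_mem' {s t} hs ht m := by
    rw [show mk (s + t) = mk s + mk t from rfl, mul_add, map_add, hs m, ht m, add_zero]
  zero_mem' m := by simp [show mk (0 : ℕ → K) = 0 from rfl]
  smul_mem' c s hs m := by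
    rw [show mk (c • s) = c • mk s from rfl, mul_smul_comm, map_smul, hs m, smul_zero]

theorem seqShift_mem_denomSubmodule {q : K[X]} {d : ℕ} (hd : q.natDegree < d) {s : ℕ → K}
    (hs : s ∈ denomSubmodule q d) : seqShift s ∈ denomSubmodule q d := by
  intro m
  have hX : mk s - PowerSeries.C (s 0) = PowerSeries.X * mk (seqShift s) := by
    have := sub_const_eq_X_mul_shift (mk s)
    simp only [coeff_mk] at this
    exact this
  calc PowerSeries.coeff (m + d) ((q : K⟦X⟧) * mk (seqShift s))
      = PowerSeries.coeff (m + d + 1) (PowerSeries.X * ((q : K⟦X⟧) * mk (seqShift s))) :=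
        (coeff_succ_X_mul _ _).symm
    _ = PowerSeries.coeff (m + 1 + d) ((q : K⟦X⟧) * mk s) - s 0 * q.coeff (m + d + 1) := by
        rw [mul_left_comm, ← hX, mul_sub, map_sub, Nat.add_right_comm,
          mul_comm (q : K⟦X⟧) (PowerSeries.C _), PowerSeries.coeff_C_mul, Polynomial.coeff_coe]
    _ = 0 := by rw [hs, coeff_eq_zero_of_natDegree_lt (by omega), mul_zero, sub_zero]

theorem finiteDimensional_denomSubmodule {q : K[X]} (hq : q.coeff 0 ≠ 0) (d : ℕ) :
    FiniteDimensional K (denomSubmodule q d) := by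
  let π : denomSubmodule q d →ₗ[K] Fin d → K :=
    LinearMap.funLeft K K Fin.val ∘ₗ (denomSubmodule q d).subtype
  refine Module.Finite.of_injective π ((injective_iff_map_eq_zero π).2 fun s hs => ?_)
  have hdvd : PowerSeries.X ^ d ∣ mk (s : ℕ → K) :=
    X_pow_dvd_iff.2 fun m hm => by simpa [π] using congrFun hs ⟨m, hm⟩
  have hzero : (q : K⟦X⟧) * mk s = 0 := by
    ext m
    rcases lt_or_ge m d with hm | hm
    · exact X_pow_dvd_iff.1 (dvd_mul_of_dvd_right hdvd _) m hm
    · simpa [Nat.sub_add_cancel hm] using s.2 (m - d)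
  have hq' : (q : K⟦X⟧) ≠ 0 := fun h => hq (by simpa using congrArg (PowerSeries.coeff 0) h)
  ext n
  simpa using congrArg (PowerSeries.coeff n) ((mul_eq_zero.1 hzero).resolve_left hq')

theorem isLinearRepresentable_of_mul_eq_coe {a : ℕ → K} {p q : K[X]} (hq : q.coeff 0 ≠ 0)
    (h : (q : K⟦X⟧) * mk a = p) : IsLinearRepresentable a := by
  set d := q.natDegree + p.natDegree + 1
  have := finiteDimensional_denomSubmodule hq d
  refine IsLinearRepresentable.of_mem_of_shift_mem (W := denomSubmodule q d)
    (fun s hs => seqShift_mem_denomSubmodule (by omega) hs) fun m => ?_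
  rw [h, Polynomial.coeff_coe, coeff_eq_zero_of_natDegree_lt (by omega)]

def binomConv {R : Type*} [Semiring R] (a b : ℕ → R) : ℕ → R :=
  fun n => ∑ x ∈ antidiagonal n, n.choose x.1 * a x.1 * b x.2

theorem IsLinearRepresentable.binomConv {a b : ℕ → K} (ha : IsLinearRepresentable a)
    (hb : IsLinearRepresentable b) : IsLinearRepresentable (binomConv a b) := by
  obtain ⟨V, _, _, _, T, φ, v, hav⟩ := ha
  obtain ⟨W, _, _, _, S, ψ, w, hbw⟩ := hb
  refine ⟨TensorProduct K V W, _, _, inferInstance, T.rTensor W + S.lTensor V,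
    TensorProduct.lid K K ∘ₗ TensorProduct.map φ ψ, v ⊗ₜ w, fun n => ?_⟩
  have hcomm : Commute (T.rTensor W) (S.lTensor V) := by
    rw [commute_iff_eq, Module.End.mul_eq_comp, Module.End.mul_eq_comp,
      LinearMap.rTensor_comp_lTensor, LinearMap.lTensor_comp_rTensor]
  rw [hcomm.add_pow', LinearMap.sum_apply, map_sum]
  refine sum_congr rfl fun x _ => ?_
  simp [LinearMap.rTensor_pow, LinearMap.lTensor_pow, hav, hbw]
  ring

end LinearRepresentable

theorem isRationalPS_mk_iff {a : ℕ → ℂ} : IsRationalPS (mk a) ↔ IsLinearRepresentable a :=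
  ⟨fun ⟨_, _, hq, h⟩ => isLinearRepresentable_of_mul_eq_coe hq h,
    IsLinearRepresentable.exists_mul_eq_coe⟩

theorem IsRationalPS.add {f g : ℂ⟦X⟧} (hf : IsRationalPS f) (hg : IsRationalPS g) :
    IsRationalPS (f + g) := by
  obtain ⟨p, q, hq, hpq⟩ := hf
  obtain ⟨p', q', hq', hpq'⟩ := hg
  refine ⟨q' * p + q * p', q * q', by simp [mul_coeff_zero, hq, hq'], ?_⟩
  push_cast
  linear_combination (q' : ℂ⟦X⟧) * hpq + (q : ℂ⟦X⟧) * hpq'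

theorem isRationalPS_mk_binomConv {a b : ℕ → ℂ} (ha : IsRationalPS (mk a))
    (hb : IsRationalPS (mk b)) : IsRationalPS (mk (binomConv a b)) := by
  rw [isRationalPS_mk_iff] at *
  exact ha.binomConv hb

theorem isRationalPS_mk_ite_eq_zero :
    IsRationalPS (mk fun n => if n = 0 then (0 : ℂ) else 1) := by
  refine ⟨Polynomial.X, 1 - Polynomial.X, by simp, ?_⟩
  ext (_ | _ | n) <;> simp [sub_mul, coeff_succ_X_mul, PowerSeries.coeff_X]

theorem egf_add (a b : ℕ → ℂ) : egf (a + b) = egf a + egf b := by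
  ext n
  simp [egf, add_div]

theorem egf_injective : Function.Injective egf := by
  intro a b h
  funext n
  have hn : (n.factorial : ℂ) ≠ 0 := Nat.cast_ne_zero.2 n.factorial_ne_zero
  exact (div_left_inj' hn).1 (by simpa [egf] using congrArg (PowerSeries.coeff n) h)

theorem egf_mul (a b : ℕ → ℂ) : egf a * egf b = egf (binomConv a b) := by
  ext n
  simp only [egf, PowerSeries.coeff_mul, coeff_mk, binomConv, sum_div]
  refine sum_congr rfl fun ⟨i, j⟩ hij => ?_
  rw [HasAntidiagonal.mem_antidiagonal] at hij
  subst hij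
  have hfac : ((i + j).factorial : ℂ) ≠ 0 := Nat.cast_ne_zero.2 (i + j).factorial_ne_zero
  rw [Nat.cast_choose ℂ (Nat.le_add_right _ _), Nat.add_sub_cancel_left]
  field_simp

theorem expPS_sub_one : expPS - 1 = egf fun n => if n = 0 then 0 else 1 := by
  ext (_ | n) <;> simp [expPS, egf]

/-- If `c̃ = ã + b̃ + (eᵗ - 1)·ã·b̃` and the ordinary generating functions of `a` and
`b` are rational, then the ordinary generating function of `c` is rational. -/
theorem isRationalPS_of_egf_relation (a b c : ℕ → ℂ)
    (h : egf c = egf a + egf b + (expPS - 1) * egf a * egf b)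
    (ha : IsRationalPS (PowerSeries.mk a)) (hb : IsRationalPS (PowerSeries.mk b)) :
    IsRationalPS (PowerSeries.mk c) := by
  have hc : c = a + b + binomConv (fun n => if n = 0 then 0 else 1) (binomConv a b) :=
    egf_injective <| by rw [h, egf_add, egf_add, ← egf_mul, ← egf_mul, expPS_sub_one, mul_assoc]
  rw [hc]
  exact (ha.add hb).add
    (isRationalPS_mk_binomConv isRationalPS_mk_ite_eq_zero (isRationalPS_mk_binomConv ha hb))
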